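/- Let w, t, v ∈ Q and let 1 ≤ i, k, p ≤ m with k ≠ p. Then the triple commutator [E_{i,w}, [E_{k,t}, E*_{p,v}]] acts on M as follows: (1) if i = p, it sends (z,x,f) to (z − f(x_k)·⟨t,v⟩·w, x + (⟨w,z⟩ + f(x_i)·q(w) − f(x_k)·⟨t,v⟩·q(w))·⟨t,v⟩·x_k − f(x_k)·⟨t,v⟩·q(w)·x_i, f); (2) if i ≠ p (in particular if i = k), it is the identity automorphism of M. -/

import Mathlib

open QuadraticMap
open scoped commutatorElement

/-- The DSER elementary orthogonal transformation `E_{i,w}` on `M = Q ⊕ P ⊕ P*`,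
`P = A^m`:  `E_{i,w}(z,x,f) = (z − f(xᵢ)•w, x + ⟨w,z⟩•xᵢ − f(xᵢ)·q(w)•xᵢ, f)`. -/
noncomputable def Eplus {A Q : Type*} [CommRing A] [AddCommGroup Q] [Module A Q]
    {m : ℕ} (q : QuadraticForm A Q) (i : Fin m) (w : Q) :
    (Q × (Fin m → A) × (Fin m → A)) ≃ₗ[A] (Q × (Fin m → A) × (Fin m → A)) where
  toFun p := (p.1 - p.2.2 i • w,
    p.2.1 + polar ⇑q w p.1 • (Pi.single i 1 : Fin m → A)
      - (p.2.2 i * q w) • (Pi.single i 1 : Fin m → A),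
    p.2.2)
  invFun p := (p.1 + p.2.2 i • w,
    p.2.1 - polar ⇑q w p.1 • (Pi.single i 1 : Fin m → A)
      - (p.2.2 i * q w) • (Pi.single i 1 : Fin m → A),
    p.2.2)
  map_add' p p' := by
    obtain ⟨z, x, f⟩ := p
    obtain ⟨z', x', f'⟩ := p'
    refine Prod.ext ?_ (Prod.ext ?_ rfl)
    · show z + z' - (f i + f' i) • w = (z - f i • w) + (z' - f' i • w)
      module
    · show x + x' + polar ⇑q w (z + z') • (Pi.single i 1 : Fin m → A)
        - ((f i + f' i) * q w) • (Pi.single i 1 : Fin m → A) = _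
      rw [polar_add_right]
      show _ = (x + polar ⇑q w z • (Pi.single i 1 : Fin m → A) - (f i * q w) • (Pi.single i 1 : Fin m → A))
        + (x' + polar ⇑q w z' • (Pi.single i 1 : Fin m → A) - (f' i * q w) • (Pi.single i 1 : Fin m → A))
      module
  map_smul' a p := by
    obtain ⟨z, x, f⟩ := p
    refine Prod.ext ?_ (Prod.ext ?_ rfl)
    · show a • z - (a • f) i • w = a • (z - f i • w)
      simp only [Pi.smul_apply, smul_eq_mul]
      module
    · show a • x + polar ⇑q w (a • z) • (Pi.single i 1 : Fin m → A)
        - ((a • f) i * q w) • (Pi.single i 1 : Fin m → A)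
        = a • (x + polar ⇑q w z • (Pi.single i 1 : Fin m → A) - (f i * q w) • (Pi.single i 1 : Fin m → A))
      rw [polar_smul_right]
      simp only [Pi.smul_apply, smul_eq_mul]
      module
  left_inv p := by
    obtain ⟨z, x, f⟩ := p
    refine Prod.ext ?_ (Prod.ext ?_ rfl)
    · show z - f i • w + f i • w = z
      module
    · show x + polar ⇑q w z • (Pi.single i 1 : Fin m → A) - (f i * q w) • (Pi.single i 1 : Fin m → A)
        - polar ⇑q w (z - f i • w) • (Pi.single i 1 : Fin m → A)
        - (f i * q w) • (Pi.single i 1 : Fin m → A) = x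
      rw [polar_sub_right, polar_smul_right, polar_self]
      simp only [smul_eq_mul]
      module
  right_inv p := by
    obtain ⟨z, x, f⟩ := p
    refine Prod.ext ?_ (Prod.ext ?_ rfl)
    · show z + f i • w - f i • w = z
      module
    · show x - polar ⇑q w z • (Pi.single i 1 : Fin m → A) - (f i * q w) • (Pi.single i 1 : Fin m → A)
        + polar ⇑q w (z + f i • w) • (Pi.single i 1 : Fin m → A)
        - (f i * q w) • (Pi.single i 1 : Fin m → A) = x
      rw [polar_add_right, polar_smul_right, polar_self]
      simp only [smul_eq_mul]
      module

/-- The DSER elementary orthogonal transformation `E*_{i,w}` on `M = Q ⊕ P ⊕ P*`: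
`E*_{i,w}(z,x,f) = (z − fᵢ(x)•w, x, f + ⟨w,z⟩•fᵢ − fᵢ(x)·q(w)•fᵢ)`. -/
noncomputable def Estar {A Q : Type*} [CommRing A] [AddCommGroup Q] [Module A Q]
    {m : ℕ} (q : QuadraticForm A Q) (i : Fin m) (w : Q) :
    (Q × (Fin m → A) × (Fin m → A)) ≃ₗ[A] (Q × (Fin m → A) × (Fin m → A)) where
  toFun p := (p.1 - p.2.1 i • w,
    p.2.1,
    p.2.2 + polar ⇑q w p.1 • (Pi.single i 1 : Fin m → A)
      - (p.2.1 i * q w) • (Pi.single i 1 : Fin m → A))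
  invFun p := (p.1 + p.2.1 i • w,
    p.2.1,
    p.2.2 - polar ⇑q w p.1 • (Pi.single i 1 : Fin m → A)
      - (p.2.1 i * q w) • (Pi.single i 1 : Fin m → A))
  map_add' p p' := by
    obtain ⟨z, x, f⟩ := p
    obtain ⟨z', x', f'⟩ := p'
    refine Prod.ext ?_ (Prod.ext rfl ?_)
    · show z + z' - (x i + x' i) • w = (z - x i • w) + (z' - x' i • w)
      module
    · show f + f' + polar ⇑q w (z + z') • (Pi.single i 1 : Fin m → A)
        - ((x i + x' i) * q w) • (Pi.single i 1 : Fin m → A) = _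
      rw [polar_add_right]
      show _ = (f + polar ⇑q w z • (Pi.single i 1 : Fin m → A)
          - (x i * q w) • (Pi.single i 1 : Fin m → A))
        + (f' + polar ⇑q w z' • (Pi.single i 1 : Fin m → A)
          - (x' i * q w) • (Pi.single i 1 : Fin m → A))
      module
  map_smul' a p := by
    obtain ⟨z, x, f⟩ := p
    refine Prod.ext ?_ (Prod.ext rfl ?_)
    · show a • z - (a • x) i • w = a • (z - x i • w)
      simp only [Pi.smul_apply, smul_eq_mul]
      module
    · show a • f + polar ⇑q w (a • z) • (Pi.single i 1 : Fin m → A)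
        - ((a • x) i * q w) • (Pi.single i 1 : Fin m → A)
        = a • (f + polar ⇑q w z • (Pi.single i 1 : Fin m → A)
          - (x i * q w) • (Pi.single i 1 : Fin m → A))
      rw [polar_smul_right]
      simp only [Pi.smul_apply, smul_eq_mul]
      module
  left_inv p := by
    obtain ⟨z, x, f⟩ := p
    refine Prod.ext ?_ (Prod.ext rfl ?_)
    · show z - x i • w + x i • w = z
      module
    · show f + polar ⇑q w z • (Pi.single i 1 : Fin m → A)
        - (x i * q w) • (Pi.single i 1 : Fin m → A)
        - polar ⇑q w (z - x i • w) • (Pi.single i 1 : Fin m → A)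
        - (x i * q w) • (Pi.single i 1 : Fin m → A) = f
      rw [polar_sub_right, polar_smul_right, polar_self]
      simp only [smul_eq_mul]
      module
  right_inv p := by
    obtain ⟨z, x, f⟩ := p
    refine Prod.ext ?_ (Prod.ext rfl ?_)
    · show z + x i • w - x i • w = z
      module
    · show f - polar ⇑q w z • (Pi.single i 1 : Fin m → A)
        - (x i * q w) • (Pi.single i 1 : Fin m → A)
        + polar ⇑q w (z + x i • w) • (Pi.single i 1 : Fin m → A)
        - (x i * q w) • (Pi.single i 1 : Fin m → A) = f
      rw [polar_add_right, polar_smul_right, polar_self]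
      simp only [smul_eq_mul]
      module

/-! For `k ≠ p` the commutator `⁅E_{k,t}, E*_{p,v}⁆` is the hyperbolic transvection
`(z, x, f) ↦ (z, x - ⟨t,v⟩ xₚ eₖ, f + ⟨t,v⟩ fₖ eₚ)`. It reads only `xₚ` and `fₖ` and changes only
`xₖ` and `fₚ`, while `E_{i,w}` reads only `z` and `fᵢ` and changes only `z` and `xᵢ`; so for
`i ≠ p` the two maps commute. For `i = p` the triple commutator is computed from this formula. -/

section

variable {A Q : Type*} [CommRing A] [AddCommGroup Q] [Module A Q] {m : ℕ}
  (q : QuadraticForm A Q)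

@[simp]
lemma Eplus_apply (i : Fin m) (w z : Q) (x f : Fin m → A) :
    Eplus q i w (z, x, f) = (z - f i • w,
      x + polar q w z • Pi.single i 1 - (f i * q w) • Pi.single i 1, f) := rfl

@[simp]
lemma Eplus_symm_apply (i : Fin m) (w z : Q) (x f : Fin m → A) :
    (Eplus q i w).symm (z, x, f) = (z + f i • w,
      x - polar q w z • Pi.single i 1 - (f i * q w) • Pi.single i 1, f) := rfl

@[simp]
lemma Estar_apply (i : Fin m) (w z : Q) (x f : Fin m → A) :
    Estar q i w (z, x, f) = (z - x i • w, x,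
      f + polar q w z • Pi.single i 1 - (x i * q w) • Pi.single i 1) := rfl

@[simp]
lemma Estar_symm_apply (i : Fin m) (w z : Q) (x f : Fin m → A) :
    (Estar q i w).symm (z, x, f) = (z + x i • w, x,
      f - polar q w z • Pi.single i 1 - (x i * q w) • Pi.single i 1) := rfl

variable {k p : Fin m}

lemma commutatorElement_Eplus_Estar_apply (hkp : k ≠ p) (t v z : Q) (x f : Fin m → A) :
    ⁅Eplus q k t, Estar q p v⁆ (z, x, f)
      = (z, x - (polar q t v * x p) • Pi.single k 1, f + (polar q t v * f k) • Pi.single p 1) := by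
  simp only [commutatorElement_def, LinearEquiv.mul_apply, LinearEquiv.coe_inv, Eplus_apply,
    Eplus_symm_apply, Estar_apply, Estar_symm_apply, Pi.add_apply, Pi.sub_apply, Pi.smul_apply,
    Pi.single_eq_of_ne hkp, Pi.single_eq_of_ne hkp.symm, smul_eq_mul, mul_zero, sub_zero, add_zero,
    polar_add_right, polar_sub_right, polar_smul_right, polar_self, polar_comm q v t, Prod.mk.injEq]
  exact ⟨by module, by module, by module⟩

lemma commutatorElement_Eplus_Estar_inv_apply (hkp : k ≠ p) (t v z : Q) (x f : Fin m → A) :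
    ⁅Eplus q k t, Estar q p v⁆⁻¹ (z, x, f)
      = (z, x + (polar q t v * x p) • Pi.single k 1, f - (polar q t v * f k) • Pi.single p 1) := by
  rw [LinearEquiv.coe_inv, LinearEquiv.symm_apply_eq, commutatorElement_Eplus_Estar_apply q hkp]
  simp [Pi.single_eq_of_ne hkp, Pi.single_eq_of_ne hkp.symm]

lemma commute_Eplus_commutatorElement_Eplus_Estar {i : Fin m} (hip : i ≠ p) (hkp : k ≠ p)
    (w t v : Q) : Commute (Eplus q i w) ⁅Eplus q k t, Estar q p v⁆ := by
  refine LinearEquiv.ext fun ⟨z, x, f⟩ => ?_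
  simp only [LinearEquiv.mul_apply, commutatorElement_Eplus_Estar_apply q hkp, Eplus_apply,
    Pi.add_apply, Pi.sub_apply, Pi.smul_apply, Pi.single_eq_of_ne hip, Pi.single_eq_of_ne hip.symm,
    smul_eq_mul, mul_zero, add_zero, sub_zero, Prod.mk.injEq, true_and, and_true]
  module

lemma commutatorElement_Eplus_commutatorElement_Eplus_Estar_apply (hkp : k ≠ p) (w t v z : Q)
    (x f : Fin m → A) :
    ⁅Eplus q p w, ⁅Eplus q k t, Estar q p v⁆⁆ (z, x, f)
      = (z - (f k * polar q t v) • w,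
          x + ((polar q w z + f p * q w - f k * polar q t v * q w) * polar q t v) • Pi.single k 1
            - (f k * polar q t v * q w) • Pi.single p 1, f) := by
  simp only [commutatorElement_def (Eplus q p w), LinearEquiv.mul_apply, LinearEquiv.coe_inv,
    commutatorElement_Eplus_Estar_apply q hkp, commutatorElement_Eplus_Estar_inv_apply q hkp,
    Eplus_apply, Eplus_symm_apply, Pi.add_apply, Pi.sub_apply, Pi.smul_apply,
    Pi.single_eq_same, Pi.single_eq_of_ne hkp, Pi.single_eq_of_ne hkp.symm, smul_eq_mul,
    mul_zero, mul_one, add_zero, sub_zero, polar_add_right, polar_smul_right,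
    polar_self, Prod.mk.injEq]
  exact ⟨by module, by module, by module⟩

end

theorem triple_commutator_Eplus_EplusEstar_general
    {A Q : Type*} [CommRing A] [AddCommGroup Q] [Module A Q]
    {m : ℕ} (q : QuadraticForm A Q) (i k p : Fin m) (hkp : k ≠ p)
    (w t v : Q) :
    (i = p → ∀ (z : Q) (x f : Fin m → A),
      ⁅Eplus q i w, ⁅Eplus q k t, Estar q p v⁆⁆ (z, x, f)
        = (z - (f k * polar ⇑q t v) • w,
           x + ((polar ⇑q w z + f i * q w - f k * polar ⇑q t v * q w)
               * polar ⇑q t v) • (Pi.single k 1 : Fin m → A)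
             - (f k * polar ⇑q t v * q w) • (Pi.single i 1 : Fin m → A),
           f)) ∧
    (i ≠ p → ⁅Eplus q i w, ⁅Eplus q k t, Estar q p v⁆⁆ = 1) := by
  constructor
  · rintro rfl
    exact commutatorElement_Eplus_commutatorElement_Eplus_Estar_apply q hkp w t v
  · intro hip
    exact commutatorElement_eq_one_iff_commute.2
      (commute_Eplus_commutatorElement_Eplus_Estar q hip hkp w t v)

theorem triple_commutator_Eplus_EplusEstar
    {A Q : Type*} [CommRing A] [Invertible (2 : A)] [AddCommGroup Q] [Module A Q]
    {m : ℕ} (q : QuadraticForm A Q) (i k p : Fin m) (hkp : k ≠ p)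
    (w t v : Q) :
    (i = p → ∀ (z : Q) (x f : Fin m → A),
      ⁅Eplus q i w, ⁅Eplus q k t, Estar q p v⁆⁆ (z, x, f)
        = (z - (f k * polar ⇑q t v) • w,
           x + ((polar ⇑q w z + f i * q w - f k * polar ⇑q t v * q w)
               * polar ⇑q t v) • (Pi.single k 1 : Fin m → A)
             - (f k * polar ⇑q t v * q w) • (Pi.single i 1 : Fin m → A),
           f)) ∧
    (i ≠ p → ⁅Eplus q i w, ⁅Eplus q k t, Estar q p v⁆⁆ = 1) :=
  triple_commutator_Eplus_EplusEstar_general q i k p hkp w t v
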